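/- arXiv:2604.21789 — 4 statements merged into one kernel-verified Lean document; each statement's English description precedes it below -/
import Mathlib

section
/- In a cooperative game on a finite weighted graph with edge-additive value V(S) = Σ_{(i,j)∈E} w_ij · p_ij(S) · C_ij, where p_ij(S) = p^H if both i,j ∈ S, p^L if exactly one of i,j is in S, and p⁰ otherwise, the Shapley value of player i equals (1/2)·Σ_{j : (i,j)∈E} (p^H_ij - p⁰_ij)·w_ij·C_ij. -/
open Finset

lemma sum_coeff_total {m : ℕ} (hm : 0 < m) (i : Fin m) :
    ∑ S ∈ (Finset.univ.erase i).powerset,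
      ((S.card.factorial * (m - S.card - 1).factorial : ℝ) / m.factorial) = 1 := by
  have hcard : (Finset.univ.erase i : Finset (Fin m)).card = m - 1 := by
    simp [Finset.card_erase_of_mem]
  rw [Finset.sum_powerset_apply_card
    (fun s => ((s.factorial * (m - s - 1).factorial : ℝ) / m.factorial)), hcard]
  have hmm : m - 1 + 1 = m := Nat.succ_pred_eq_of_pos hm
  rw [hmm]
  have key : ∀ j ∈ Finset.range m,
      (m-1).choose j • ((j.factorial * (m - j - 1).factorial : ℝ) / m.factorial)
        = (1 : ℝ) / m := by
    intro j hj
    rw [Finset.mem_range] at hj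
    have hj' : j ≤ m - 1 := by omega
    have h1 : (m-1).choose j * j.factorial * (m - 1 - j).factorial = (m-1).factorial :=
      Nat.choose_mul_factorial_mul_factorial hj'
    have h2 : m - j - 1 = m - 1 - j := by omega
    have h3 : m.factorial = m * (m-1).factorial := by
      conv_lhs => rw [← hmm]
      rw [Nat.factorial_succ, hmm]
    rw [nsmul_eq_mul, h2]
    have hm0 : (m:ℝ) ≠ 0 := by positivity
    have hf0 : (m.factorial:ℝ) ≠ 0 := by positivity
    field_simp
    push_cast [h3, ← h1]
    ring
  rw [Finset.sum_congr rfl key, Finset.sum_const, Finset.card_range, nsmul_eq_mul]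
  field_simp

lemma sum_coeff_half {m : ℕ} (hm : 0 < m) (i b : Fin m) (hb : b ≠ i) :
    ∑ S ∈ (Finset.univ.erase i).powerset.filter (fun S => b ∈ S),
      ((S.card.factorial * (m - S.card - 1).factorial : ℝ) / m.factorial) = 1/2 := by
  set U : Finset (Fin m) := Finset.univ.erase i with hU
  set c : Finset (Fin m) → ℝ :=
    fun S => ((S.card.factorial * (m - S.card - 1).factorial : ℝ) / m.factorial) with hc
  have hbU : b ∈ U := Finset.mem_erase.2 ⟨hb, Finset.mem_univ b⟩
  have hUcard : U.card = m - 1 := by simp [hU, Finset.card_erase_of_mem]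
  have hAB : (∑ S ∈ U.powerset.filter (fun S => b ∈ S), c S)
      = ∑ S ∈ U.powerset.filter (fun S => ¬ b ∈ S), c S := by
    refine Finset.sum_nbij' (fun S => U \ S) (fun S => U \ S) ?_ ?_ ?_ ?_ ?_
    · intro S hS
      rw [Finset.mem_filter, Finset.mem_powerset] at hS ⊢
      exact ⟨Finset.sdiff_subset, fun h => (Finset.mem_sdiff.1 h).2 hS.2⟩
    · intro S hS
      rw [Finset.mem_filter, Finset.mem_powerset] at hS ⊢
      exact ⟨Finset.sdiff_subset, Finset.mem_sdiff.2 ⟨hbU, hS.2⟩⟩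
    · intro S hS
      rw [Finset.mem_filter, Finset.mem_powerset] at hS
      exact Finset.sdiff_sdiff_eq_self hS.1
    · intro S hS
      rw [Finset.mem_filter, Finset.mem_powerset] at hS
      exact Finset.sdiff_sdiff_eq_self hS.1
    · intro S hS
      rw [Finset.mem_filter, Finset.mem_powerset] at hS
      have hcard : (U \ S).card = m - 1 - S.card := by
        rw [Finset.card_sdiff_of_subset hS.1, hUcard]
      have hle : S.card ≤ m - 1 := hUcard ▸ Finset.card_le_card hS.1
      simp only [hc, hcard]
      have e1 : m - (m - 1 - S.card) - 1 = S.card := by omega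
      have e2 : m - S.card - 1 = m - 1 - S.card := by omega
      rw [e1, e2]
      ring
  have htot : (∑ S ∈ U.powerset.filter (fun S => b ∈ S), c S)
      + ∑ S ∈ U.powerset.filter (fun S => ¬ b ∈ S), c S = 1 := by
    rw [Finset.sum_filter_add_sum_filter_not]
    exact sum_coeff_total hm i
  linarith [hAB, htot]

lemma sum_coeff_half_not {m : ℕ} (hm : 0 < m) (i b : Fin m) (hb : b ≠ i) :
    ∑ S ∈ (Finset.univ.erase i).powerset.filter (fun S => ¬ b ∈ S),
      ((S.card.factorial * (m - S.card - 1).factorial : ℝ) / m.factorial) = 1/2 := by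
  have h1 := sum_coeff_total hm i
  have h2 := sum_coeff_half hm i b hb
  rw [← Finset.sum_filter_add_sum_filter_not (Finset.univ.erase i).powerset
    (fun S => b ∈ S)] at h1
  linarith


/-- Edge-additive coalition value: V(S) = Σ_{(i,j)∈E} w_ij · p_ij(S) · C_ij,
with p_ij(S) = p^H if both endpoints are in S, p^L if exactly one is, p⁰
otherwise. -/
noncomputable def coalitionValue {m : ℕ} (E : Finset (Fin m × Fin m))
    (w Cst pH pL p0 : Fin m × Fin m → ℝ) (S : Finset (Fin m)) : ℝ :=
  ∑ e ∈ E, w e *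
    (if e.1 ∈ S ∧ e.2 ∈ S then pH e
     else if e.1 ∈ S ∨ e.2 ∈ S then pL e
     else p0 e) * Cst e

/-- The Shapley value of player i in the edge-additive game. -/
noncomputable def shapley {m : ℕ} (E : Finset (Fin m × Fin m))
    (w Cst pH pL p0 : Fin m × Fin m → ℝ) (i : Fin m) : ℝ :=
  ∑ S ∈ (Finset.univ.erase i).powerset,
    ((S.card.factorial * (m - S.card - 1).factorial : ℝ) / m.factorial) *
      (coalitionValue E w Cst pH pL p0 (insert i S)
        - coalitionValue E w Cst pH pL p0 S)

/-- Network Shapley characterization: player i's Shapley value equals half the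
sum, over edges incident to i, of (p^H - p⁰)·w·C. -/
theorem network_shapley {m : ℕ} (hm : 0 < m)
    (E : Finset (Fin m × Fin m)) (w Cst pH pL p0 : Fin m × Fin m → ℝ)
    (hE : ∀ e ∈ E, e.1 ≠ e.2)
    (hw : ∀ e ∈ E, 0 ≤ w e) (hC : ∀ e ∈ E, 0 ≤ Cst e)
    (hp : ∀ e ∈ E, p0 e < pL e ∧ pL e < pH e)
    (i : Fin m) :
    shapley E w Cst pH pL p0 i =
      (1 / 2) * ∑ e ∈ E.filter (fun e => e.1 = i ∨ e.2 = i),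
        (pH e - p0 e) * w e * Cst e := by
  classical
  have expand : shapley E w Cst pH pL p0 i
      = ∑ e ∈ E, ∑ S ∈ (Finset.univ.erase i).powerset,
          ((S.card.factorial * (m - S.card - 1).factorial : ℝ) / m.factorial) *
            (w e *
              (if e.1 ∈ insert i S ∧ e.2 ∈ insert i S then pH e
               else if e.1 ∈ insert i S ∨ e.2 ∈ insert i S then pL e
               else p0 e) * Cst e
            - w e *
              (if e.1 ∈ S ∧ e.2 ∈ S then pH e
               else if e.1 ∈ S ∨ e.2 ∈ S then pL e
               else p0 e) * Cst e) := by
    simp only [shapley, coalitionValue, ← Finset.sum_sub_distrib, Finset.mul_sum]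
    exact Finset.sum_comm
  rw [expand, Finset.mul_sum, Finset.sum_filter]
  refine Finset.sum_congr rfl fun e he => ?_
  have hne := hE e he
  by_cases h1 : e.1 = i
  · -- e.1 = i, so e.2 ≠ i
    have h2 : e.2 ≠ i := fun h => hne (h1.trans h.symm)
    have step : ∑ S ∈ (Finset.univ.erase i).powerset,
        ((S.card.factorial * (m - S.card - 1).factorial : ℝ) / m.factorial) *
          (w e *
            (if e.1 ∈ insert i S ∧ e.2 ∈ insert i S then pH e
             else if e.1 ∈ insert i S ∨ e.2 ∈ insert i S then pL e
             else p0 e) * Cst e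
          - w e *
            (if e.1 ∈ S ∧ e.2 ∈ S then pH e
             else if e.1 ∈ S ∨ e.2 ∈ S then pL e
             else p0 e) * Cst e)
        = ∑ S ∈ (Finset.univ.erase i).powerset,
            (if e.2 ∈ S then w e * Cst e * (pH e - pL e)
             else w e * Cst e * (pL e - p0 e)) *
            ((S.card.factorial * (m - S.card - 1).factorial : ℝ) / m.factorial) := by
      refine Finset.sum_congr rfl fun S hS => ?_
      have hiS : i ∉ S := fun h =>
        (Finset.notMem_erase i Finset.univ) (Finset.mem_powerset.1 hS h)
      by_cases hb2 : e.2 ∈ S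
      · simp [Finset.mem_insert, h1, h2, hb2, hiS]
        ring
      · simp [Finset.mem_insert, h1, h2, hb2, hiS]
        ring
    rw [step, ← Finset.sum_filter_add_sum_filter_not (Finset.univ.erase i).powerset
      (fun S => e.2 ∈ S)]
    have sA : ∑ S ∈ (Finset.univ.erase i).powerset.filter (fun S => e.2 ∈ S),
        (if e.2 ∈ S then w e * Cst e * (pH e - pL e)
         else w e * Cst e * (pL e - p0 e)) *
        ((S.card.factorial * (m - S.card - 1).factorial : ℝ) / m.factorial)
        = w e * Cst e * (pH e - pL e) * (1/2) := by
      rw [Finset.sum_congr rfl (fun S hS => by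
        rw [if_pos (Finset.mem_filter.1 hS).2]), ← Finset.mul_sum,
        sum_coeff_half hm i e.2 h2]
    have sB : ∑ S ∈ (Finset.univ.erase i).powerset.filter (fun S => ¬ e.2 ∈ S),
        (if e.2 ∈ S then w e * Cst e * (pH e - pL e)
         else w e * Cst e * (pL e - p0 e)) *
        ((S.card.factorial * (m - S.card - 1).factorial : ℝ) / m.factorial)
        = w e * Cst e * (pL e - p0 e) * (1/2) := by
      rw [Finset.sum_congr rfl (fun S hS => by
        rw [if_neg (Finset.mem_filter.1 hS).2]), ← Finset.mul_sum,
        sum_coeff_half_not hm i e.2 h2]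
    rw [sA, sB, if_pos (Or.inl h1)]
    ring
  · by_cases h2 : e.2 = i
    · -- e.2 = i, e.1 ≠ i
      have step : ∑ S ∈ (Finset.univ.erase i).powerset,
          ((S.card.factorial * (m - S.card - 1).factorial : ℝ) / m.factorial) *
            (w e *
              (if e.1 ∈ insert i S ∧ e.2 ∈ insert i S then pH e
               else if e.1 ∈ insert i S ∨ e.2 ∈ insert i S then pL e
               else p0 e) * Cst e
            - w e *
              (if e.1 ∈ S ∧ e.2 ∈ S then pH e
               else if e.1 ∈ S ∨ e.2 ∈ S then pL e
               else p0 e) * Cst e)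
          = ∑ S ∈ (Finset.univ.erase i).powerset,
              (if e.1 ∈ S then w e * Cst e * (pH e - pL e)
               else w e * Cst e * (pL e - p0 e)) *
              ((S.card.factorial * (m - S.card - 1).factorial : ℝ) / m.factorial) := by
        refine Finset.sum_congr rfl fun S hS => ?_
        have hiS : i ∉ S := fun h =>
          (Finset.notMem_erase i Finset.univ) (Finset.mem_powerset.1 hS h)
        have he2S : ¬ e.2 ∈ S := fun h => hiS (h2 ▸ h)
        by_cases hb1 : e.1 ∈ S
        · rw [if_pos ⟨Finset.mem_insert_of_mem hb1,
            Finset.mem_insert.2 (Or.inl h2)⟩,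
            if_neg (fun h => he2S h.2), if_pos (Or.inl hb1), if_pos hb1]
          ring
        · have c1 : ¬ (e.1 ∈ insert i S ∧ e.2 ∈ insert i S) := by
            intro h
            rcases Finset.mem_insert.1 h.1 with h' | h'
            exacts [h1 h', hb1 h']
          rw [if_neg c1, if_pos (Or.inr (Finset.mem_insert.2 (Or.inl h2))),
            if_neg (fun h => hb1 h.1), if_neg (fun h => h.elim hb1 he2S),
            if_neg hb1]
          ring
      rw [step, ← Finset.sum_filter_add_sum_filter_not (Finset.univ.erase i).powerset
        (fun S => e.1 ∈ S)]
      have sA : ∑ S ∈ (Finset.univ.erase i).powerset.filter (fun S => e.1 ∈ S),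
          (if e.1 ∈ S then w e * Cst e * (pH e - pL e)
           else w e * Cst e * (pL e - p0 e)) *
          ((S.card.factorial * (m - S.card - 1).factorial : ℝ) / m.factorial)
          = w e * Cst e * (pH e - pL e) * (1/2) := by
        rw [Finset.sum_congr rfl (fun S hS => by
          rw [if_pos (Finset.mem_filter.1 hS).2]), ← Finset.mul_sum,
          sum_coeff_half hm i e.1 h1]
      have sB : ∑ S ∈ (Finset.univ.erase i).powerset.filter (fun S => ¬ e.1 ∈ S),
          (if e.1 ∈ S then w e * Cst e * (pH e - pL e)
           else w e * Cst e * (pL e - p0 e)) *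
          ((S.card.factorial * (m - S.card - 1).factorial : ℝ) / m.factorial)
          = w e * Cst e * (pL e - p0 e) * (1/2) := by
        rw [Finset.sum_congr rfl (fun S hS => by
          rw [if_neg (Finset.mem_filter.1 hS).2]), ← Finset.mul_sum,
          sum_coeff_half_not hm i e.1 h1]
      rw [sA, sB, if_pos (Or.inr h2)]
      ring
    · -- neither endpoint is i
      rw [if_neg (by tauto)]
      refine Finset.sum_eq_zero fun S hS => ?_
      have m1 : e.1 ∈ insert i S ↔ e.1 ∈ S := by
        simp [Finset.mem_insert, h1]
      have m2 : e.2 ∈ insert i S ↔ e.2 ∈ S := by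
        simp [Finset.mem_insert, h2]
      simp only [m1, m2, sub_self, mul_zero]
end

section
/- Greedy maximization of a monotone submodular function f with f(∅) = 0 under a cardinality constraint K achieves at least a (1 - 1/e) fraction of the optimum: if S_greedy is built by K iterations of adding the element with largest marginal gain, and S* is any set with |S*| ≤ K, then f(S_greedy) ≥ (1 - (1 - 1/K)^K)·f(S*) ≥ (1 - 1/e)·f(S*). -/
open Finset

variable {Ω : Type*} [Fintype Ω] [DecidableEq Ω] [Nonempty Ω]

def Submodular (f : Finset Ω → ℝ) : Prop :=
  ∀ A B : Finset Ω, A ⊆ B → ∀ e ∉ B,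
    f (insert e B) - f B ≤ f (insert e A) - f A

def MonotoneSetFun (f : Finset Ω → ℝ) : Prop :=
  ∀ A B : Finset Ω, A ⊆ B → f A ≤ f B

lemma sum_marg (f : Finset Ω → ℝ) (hsub : Submodular f) (A : Finset Ω) :
    ∀ T : Finset Ω, f (A ∪ T) - f A ≤ ∑ e ∈ T \ A, (f (insert e A) - f A) := by
  intro T
  induction T using Finset.induction_on with
  | empty => simp
  | @insert a T ha IH =>
    by_cases haA : a ∈ A
    · rw [Finset.insert_sdiff_of_mem _ haA]
      have : A ∪ insert a T = A ∪ T := by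
        rw [Finset.union_insert, Finset.insert_eq_self.2 (Finset.mem_union_left _ haA)]
      rw [this]; exact IH
    · rw [Finset.insert_sdiff_of_notMem _ haA, Finset.union_insert,
        Finset.sum_insert (by simp [ha])]
      have haAT : a ∉ A ∪ T := by simp [ha, haA]
      have h1 := hsub A (A ∪ T) Finset.subset_union_left a haAT
      linarith

/-- Nemhauser–Wolsey–Fisher greedy bound: if f is monotone submodular with
f(∅) = 0 and S k is the greedy sequence (each step adds an element of largest
marginal gain), then after K ≥ 1 steps, f(S K) ≥ (1-(1-1/K)^K)·f(S*) ≥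
(1-1/e)·f(S*) for any S* with |S*| ≤ K. -/
theorem greedy_submodular_bound (f : Finset Ω → ℝ)
    (hmono : MonotoneSetFun f) (hsub : Submodular f)
    (hnonneg : ∀ A : Finset Ω, 0 ≤ f A) (hempty : f ∅ = 0)
    (S : ℕ → Finset Ω) (hS0 : S 0 = ∅)
    (hgreedy : ∀ k : ℕ, ∃ e : Ω, S (k + 1) = insert e (S k) ∧
      ∀ e' : Ω, f (insert e' (S k)) ≤ f (insert e (S k)))
    (K : ℕ) (hK : 1 ≤ K)
    (Sstar : Finset Ω) (hcard : Sstar.card ≤ K) :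
    (1 - (1 - 1 / (K : ℝ)) ^ K) * f Sstar ≤ f (S K) ∧
    (1 - 1 / Real.exp 1) * f Sstar ≤ f (S K) := by
  have hKpos : (0 : ℝ) < K := by exact_mod_cast hK
  have hKne : (K : ℝ) ≠ 0 := ne_of_gt hKpos
  -- key per-step inequality
  have key : ∀ k : ℕ, f Sstar - f (S k) ≤ (K : ℝ) * (f (S (k + 1)) - f (S k)) := by
    intro k
    obtain ⟨e, hSe, hbest⟩ := hgreedy k
    have hdelta : 0 ≤ f (S (k + 1)) - f (S k) := by
      have := hmono (S k) (S (k + 1)) (hSe ▸ Finset.subset_insert _ _)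
      linarith
    have h1 : f Sstar ≤ f (S k ∪ Sstar) := hmono _ _ Finset.subset_union_right
    have h2 := sum_marg f hsub (S k) Sstar
    have h3 : ∑ e' ∈ Sstar \ S k, (f (insert e' (S k)) - f (S k)) ≤
        (Sstar \ S k).card * (f (S (k + 1)) - f (S k)) := by
      have := Finset.sum_le_card_nsmul (Sstar \ S k)
        (fun e' => f (insert e' (S k)) - f (S k)) (f (S (k + 1)) - f (S k))
        (fun e' _ => by simp only [hSe]; linarith [hbest e'])
      simpa [nsmul_eq_mul] using this
    have h4 : ((Sstar \ S k).card : ℝ) ≤ (K : ℝ) := by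
      exact_mod_cast le_trans (Finset.card_le_card (Finset.sdiff_subset)) hcard
    have h5 : ((Sstar \ S k).card : ℝ) * (f (S (k + 1)) - f (S k)) ≤
        (K : ℝ) * (f (S (k + 1)) - f (S k)) := mul_le_mul_of_nonneg_right h4 hdelta
    push_cast at h3
    linarith
  -- recursion gives geometric decay
  have hc0 : (0 : ℝ) ≤ 1 - 1 / (K : ℝ) := by
    have : 1 / (K : ℝ) ≤ 1 := by
      rw [div_le_one hKpos]; exact_mod_cast hK
    linarith
  have geom : ∀ k : ℕ, f Sstar - f (S k) ≤ (1 - 1 / (K : ℝ)) ^ k * f Sstar := by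
    intro k
    induction k with
    | zero => simp [hS0, hempty]
    | succ k IH =>
      have hk := key k
      have step : f Sstar - f (S (k + 1)) ≤ (1 - 1 / (K : ℝ)) * (f Sstar - f (S k)) := by
        have : (1 - 1 / (K : ℝ)) * (f Sstar - f (S k)) =
            (f Sstar - f (S k)) - (1 / K) * (f Sstar - f (S k)) := by ring
        rw [this]
        have : (1 / (K : ℝ)) * (f Sstar - f (S k)) ≤ f (S (k + 1)) - f (S k) := by
          rw [div_mul_eq_mul_div, div_le_iff₀ hKpos, one_mul]
          linarith [key k]
        linarith
      calc f Sstar - f (S (k + 1)) ≤ (1 - 1 / (K : ℝ)) * (f Sstar - f (S k)) := step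
        _ ≤ (1 - 1 / (K : ℝ)) * ((1 - 1 / (K : ℝ)) ^ k * f Sstar) :=
            mul_le_mul_of_nonneg_left IH hc0
        _ = (1 - 1 / (K : ℝ)) ^ (k + 1) * f Sstar := by ring
  have first : (1 - (1 - 1 / (K : ℝ)) ^ K) * f Sstar ≤ f (S K) := by
    have := geom K
    nlinarith [this]
  refine ⟨first, ?_⟩
  -- (1 - 1/K)^K ≤ exp(-1)
  have hexp : (1 - 1 / (K : ℝ)) ^ K ≤ 1 / Real.exp 1 := by
    have h1 : 1 - 1 / (K : ℝ) ≤ Real.exp (-(1 / K)) := by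
      have := Real.add_one_le_exp (-(1 / (K : ℝ)))
      linarith
    have h2 : (1 - 1 / (K : ℝ)) ^ K ≤ (Real.exp (-(1 / K))) ^ K :=
      pow_le_pow_left₀ hc0 h1 K
    have h3 : (Real.exp (-(1 / (K : ℝ)))) ^ K = Real.exp (-1) := by
      rw [← Real.exp_nat_mul]
      congr 1
      field_simp
    rw [h3, Real.exp_neg] at h2
    simpa [one_div] using h2
  have : (1 - 1 / Real.exp 1) * f Sstar ≤ (1 - (1 - 1 / (K : ℝ)) ^ K) * f Sstar := by
    apply mul_le_mul_of_nonneg_right _ (hnonneg Sstar)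
    linarith
  linarith
end

section
/- In the Gaussian aggregation model, detection quality B(m₁,m₂) = σ²_y/(σ²_y + σ²_agg(m₁,m₂)) is strictly increasing in m_j on (0,1] whenever m_j·σ²_η < (1-m_j)·σ²_z; in particular, at m_j < σ²_z/(σ²_η+σ²_z), increasing bank j's reporting precision strictly increases both banks' detection quality, establishing the positive reporting spillover. -/
/-- Aggregated noise variance in the two-bank Gaussian model. -/
noncomputable def sigmaAgg (σηsq σzsq m₁ m₂ : ℝ) : ℝ :=
  (1/4) * (m₁^2 * σηsq + (1 - m₁)^2 * σzsq + m₂^2 * σηsq + (1 - m₂)^2 * σzsq)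

/-- Positive reporting spillover: detection quality
B(m₁,m₂) = σ²_y/(σ²_y + σ²_agg(m₁,m₂)) is strictly increasing in bank j's
reporting precision m_j on the region of [0,1] where m_j·σ²_η < (1-m_j)·σ²_z. -/
theorem reporting_spillover (σysq σηsq σzsq : ℝ)
    (hy : 0 < σysq) (hη : 0 < σηsq) (hz : 0 < σzsq) (m₁ : ℝ) :
    StrictMonoOn (fun mj : ℝ => σysq / (σysq + sigmaAgg σηsq σzsq m₁ mj))
      {m : ℝ | 0 ≤ m ∧ m ≤ 1 ∧ m * σηsq < (1 - m) * σzsq} := by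
  rintro a ⟨ha0, ha1, ha⟩ b ⟨hb0, hb1, hb⟩ hab
  have hagg : ∀ m : ℝ, 0 ≤ sigmaAgg σηsq σzsq m₁ m := by
    intro m
    unfold sigmaAgg
    nlinarith [sq_nonneg m₁, sq_nonneg (1 - m₁), sq_nonneg m, sq_nonneg (1 - m),
      sq_nonneg (m₁ * Real.sqrt σηsq)]
  have hlt : sigmaAgg σηsq σzsq m₁ b < sigmaAgg σηsq σzsq m₁ a := by
    unfold sigmaAgg
    nlinarith [mul_pos (sub_pos.2 hab) (sub_pos.2 ha), mul_pos (sub_pos.2 hab) (sub_pos.2 hb)]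
  have hpb : 0 < σysq + sigmaAgg σηsq σzsq m₁ b := by linarith [hagg b]
  exact div_lt_div_of_pos_left hy hpb (by linarith)
end

section
/- For the bank's detection-investment first-order condition 2p₀(1 - φ*) = c·D + α_φ·D·(1-D)·[(r_L - r) - c·φ*], with p₀ > 0, c > 0, D ∈ (0,1), r_L > r, and interior solution φ* ∈ (0,1) satisfying (r_L - r) - c·φ* > 0: the equilibrium φ* is strictly decreasing in α_φ. (By the implicit function theorem applied to H(φ, α_φ) = 2p₀(1-φ) - cD - α_φD(1-D)[(r_L - r) - cφ], with ∂H/∂α_φ < 0 and ∂H/∂φ < 0.) -/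
/-- The bank's detection-investment first-order condition
H(φ, α) = 2p₀(1-φ) - cD - α·D(1-D)·[(r_L - r) - cφ] = 0. Under the stated
interiority and sign conditions, the solution φ* is strictly decreasing in the
competitive intensity α_φ: if φ₁ solves the FOC at α₁ and φ₂ at α₂ with
α₁ < α₂, then φ₂ < φ₁. -/
theorem detection_investment_decreasing_in_competition
    (p₀ c D r rL : ℝ) (hp₀ : 0 < p₀) (hc : 0 < c)
    (hD0 : 0 < D) (hD1 : D < 1) (hr : r < rL)
    (α₁ α₂ φ₁ φ₂ : ℝ) (hα : α₁ < α₂) (hα₁ : 0 ≤ α₁)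
    (hφ₁ : φ₁ ∈ Set.Ioo (0:ℝ) 1) (hφ₂ : φ₂ ∈ Set.Ioo (0:ℝ) 1)
    (hint₁ : 0 < (rL - r) - c * φ₁) (hint₂ : 0 < (rL - r) - c * φ₂)
    (hslope₁ : α₁ * D * (1 - D) * c < 2 * p₀)
    (hslope₂ : α₂ * D * (1 - D) * c < 2 * p₀)
    (hFOC₁ : 2 * p₀ * (1 - φ₁) = c * D + α₁ * D * (1 - D) * ((rL - r) - c * φ₁))
    (hFOC₂ : 2 * p₀ * (1 - φ₂) = c * D + α₂ * D * (1 - D) * ((rL - r) - c * φ₂)) :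
    φ₂ < φ₁ := by
  have hM : 0 < D * (1 - D) := by nlinarith
  by_contra h
  push_neg at h
  nlinarith [mul_pos (mul_pos (sub_pos.mpr hα) hM) hint₂,
    mul_nonneg (sub_nonneg.mpr (le_of_lt hslope₁)) (sub_nonneg.mpr h)]
end
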